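/- Let n ≥ 1, let α_0, …, α_{n−2} lie in the open unit disc, let β lie on the unit circle, let Φ_k be the monic polynomials of the Szegő recursion with Verblunsky coefficients α_0, …, α_{n−2}, and let Φ_n(z; β) = zΦ_{n−1}(z) − conj(β)·Φ_{n−1}^*(z) be the paraorthogonal polynomial. Then Φ_n(z; β) = det(z·I_n − C_n(α_0, …, α_{n−2}, β)), the characteristic polynomial of the finite CMV matrix with coefficients α_0, …, α_{n−2}, β. In particular, the zeros of Φ_n(·; β) are exactly the eigenvalues of C_n(α_0, …, α_{n−2}, β). -/

import Mathlib

open Polynomial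

open Polynomial in
/-- The monic OPUC from the Szegő recursion with Verblunsky coefficients `α`:
`Φ_0 = 1`, `Φ_{n+1}(z) = z Φ_n(z) - conj(α_n) Φ_n^*(z)`, where
`Φ_n^*(z) = zⁿ conj(Φ_n(1/conj z))` is the reversed polynomial. -/
noncomputable def szego (α : ℕ → ℂ) : ℕ → Polynomial ℂ
  | 0 => 1
  | n + 1 => X * szego α n -
      Polynomial.C ((starRingEnd ℂ) (α n)) *
        Polynomial.reflect n ((szego α n).map (starRingEnd ℂ))

open Polynomial in
/-- The paraorthogonal polynomial `Φ_{n+1}(z;β) = z Φ_n(z) - conj(β) Φ_n^*(z)`. -/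
noncomputable def popuc (α : ℕ → ℂ) (β : ℂ) (n : ℕ) : Polynomial ℂ :=
  X * szego α n -
    Polynomial.C ((starRingEnd ℂ) β) *
      Polynomial.reflect n ((szego α n).map (starRingEnd ℂ))

noncomputable def tauc (γ : ℂ) : ℂ := (Real.sqrt (1 - ‖γ‖ ^ 2) : ℝ)

/-- Entries of the semi-infinite CMV factor `L = Θ(γ₀) ⊕ Θ(γ₂) ⊕ ⋯`, where
`Θ(γ)` is the 2×2 matrix with rows `(conj γ, τ)`, `(τ, -γ)` and the block `Θ(γ_{2j})`
occupies rows and columns `2j, 2j+1`. -/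
noncomputable def Lent (γ : ℕ → ℂ) (i j : ℕ) : ℂ :=
  if i % 2 = 0 then
    if j = i then (starRingEnd ℂ) (γ i) else if j = i + 1 then tauc (γ i) else 0
  else
    if j = i - 1 then tauc (γ (i - 1)) else if j = i then -γ (i - 1) else 0

/-- Entries of the semi-infinite CMV factor `M = 1 ⊕ Θ(γ₁) ⊕ Θ(γ₃) ⊕ ⋯`, the block
`Θ(γ_{2j+1})` occupying rows and columns `2j+1, 2j+2`. -/
noncomputable def Ment (γ : ℕ → ℂ) (i j : ℕ) : ℂ :=
  if i = 0 then (if j = 0 then 1 else 0)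
  else if i % 2 = 1 then
    if j = i then (starRingEnd ℂ) (γ i) else if j = i + 1 then tauc (γ i) else 0
  else
    if j = i - 1 then tauc (γ (i - 1)) else if j = i then -γ (i - 1) else 0

/-- The `n × n` finite CMV matrix: the product of the upper-left `n × n` blocks of
`L` and `M`; when `|γ_{n-1}| = 1` this is the upper-left `n × n` block of the
semi-infinite product `L·M`. -/
noncomputable def CMVfin (γ : ℕ → ℂ) (n : ℕ) : Matrix (Fin n) (Fin n) ℂ :=
  (Matrix.of fun i j : Fin n => Lent γ i j) * (Matrix.of fun i j : Fin n => Ment γ i j)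

/-!
Write `C_n = L M`, with `L = Θ(γ₀) ⊕ Θ(γ₂) ⊕ ⋯` and `M = 1 ⊕ Θ(γ₁) ⊕ ⋯` cut down to `n × n`.
The cut-down `L` is still unitary: the only entry lost is `τ(γ_{n-1})`, which vanishes since
`|γ_{n-1}| = 1`. Hence `z - C_n = L N` with `N = z Lᴴ - M`. Both `L` and `N` are tridiagonal, so
their leading principal minors obey a three-term recurrence, and by `|γ|² + τ(γ)² = 1` the one
for `N` is the Szegő recursion: `det N_{2k} = (-1)^k Φ_{2k}(z)` and
`det N_{2k+1} = (-1)^(k+1) Φ_{2k+1}^*(z)`, while `det L_{2k} = (-1)^k` and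
`det L_{2k+1} = (-1)^k conj γ_{2k}`. For odd `n`, `|γ_{n-1}| = 1` also gives
`Φ_n = -conj γ_{n-1} Φ_n^*`. Finally, the paraorthogonal polynomial is `Φ_n` for the
coefficients `α_0, …, α_{n-2}, β`.
-/

open ComplexConjugate Matrix

namespace Matrix

def leadingBlock {R : Type*} (f : ℕ → ℕ → R) (n : ℕ) : Matrix (Fin n) (Fin n) R :=
  of fun i j => f i j

theorem leadingBlock_submatrix_castSucc {R : Type*} (f : ℕ → ℕ → R) (n : ℕ) :
    (leadingBlock f (n + 1)).submatrix Fin.castSucc Fin.castSucc = leadingBlock f n :=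
  rfl

theorem det_leadingBlock_add_two {R : Type*} [CommRing R] {f : ℕ → ℕ → R}
    (hf : ∀ i j, j + 2 ≤ i ∨ i + 2 ≤ j → f i j = 0) (m : ℕ) :
    (leadingBlock f (m + 2)).det =
      f (m + 1) (m + 1) * (leadingBlock f (m + 1)).det -
        f (m + 1) m * f m (m + 1) * (leadingBlock f m).det := by
  have hminor : ((leadingBlock f (m + 2)).submatrix Fin.castSucc
      (Fin.last m).castSucc.succAbove).det = f m (m + 1) * (leadingBlock f m).det := by
    rw [det_succ_column _ (Fin.last m), Fin.sum_univ_castSucc, Finset.sum_eq_zero, zero_add]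
    · have hcols : (Fin.last m).castSucc.succAbove ∘ Fin.castSucc = Fin.castSucc ∘
          Fin.castSucc := by
        ext j
        simp [Fin.succAbove_castSucc_of_lt _ _ j.castSucc_lt_last]
      rw [submatrix_submatrix, Fin.succAbove_last, hcols, ← submatrix_submatrix,
        leadingBlock_submatrix_castSucc, leadingBlock_submatrix_castSucc]
      simp [leadingBlock, ← two_mul, pow_mul]
    · intro i _
      simp [leadingBlock, hf i (m + 1) (Or.inr (by omega))]
  rw [det_succ_row _ (Fin.last (m + 1)), Fin.sum_univ_castSucc, Fin.sum_univ_castSucc,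
    Finset.sum_eq_zero, zero_add, Fin.succAbove_last, hminor, leadingBlock_submatrix_castSucc]
  · have h1 : ((-1 : R)) ^ (m + 1 + (m + 1)) = 1 := by rw [← two_mul, pow_mul]; simp
    have h2 : ((-1 : R)) ^ (m + 1 + m) = -1 := by
      rw [add_right_comm, ← two_mul, pow_succ, pow_mul]; simp
    simp only [leadingBlock, of_apply, Fin.val_last, Fin.val_castSucc, h1, h2]
    ring
  · intro j _
    simp [leadingBlock, hf (m + 1) j (Or.inl (by omega))]

end Matrix

noncomputable def szegoStar (α : ℕ → ℂ) (k : ℕ) : ℂ[X] :=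
  reflect k ((szego α k).map conj)

section Szego

variable (α : ℕ → ℂ) (k : ℕ)

theorem szego_succ : szego α (k + 1) = X * szego α k - C (conj (α k)) * szegoStar α k :=
  rfl

theorem natDegree_szego_le : (szego α k).natDegree ≤ k := by
  induction k with
  | zero => simp [szego]
  | succ k ih =>
    have hstar : (szegoStar α k).natDegree ≤ k :=
      natDegree_reflect_le.trans (max_le le_rfl (natDegree_map_le.trans ih))
    rw [szego_succ]
    refine (natDegree_sub_le _ _).trans (max_le ?_ ?_)
    · exact natDegree_mul_le.trans (by rw [natDegree_X]; omega)
    · exact (natDegree_C_mul_le _ _).trans (hstar.trans k.le_succ)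

theorem map_conj_szegoStar : (szegoStar α k).map conj = reflect k (szego α k) := by
  rw [szegoStar, ← reflect_map, Polynomial.map_map]
  congr
  ext
  simp

theorem szegoStar_succ :
    szegoStar α (k + 1) = szegoStar α k - C (α k) * X * szego α k := by
  have hdeg := natDegree_szego_le α k
  rw [szegoStar, szego_succ, Polynomial.map_sub, Polynomial.map_mul, Polynomial.map_mul, map_X,
    map_C, map_conj_szegoStar, Complex.conj_conj, reflect_sub, reflect_C_mul, add_comm k 1,
    reflect_mul _ _ natDegree_X_le (natDegree_map_le.trans hdeg), reflect_one_X, one_mul,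
    ← one_mul (reflect k (szego α k)),
    reflect_mul (F := 1) _ _ (by simp) (natDegree_reflect_le.trans (max_le le_rfl hdeg)),
    reflect_reflect, reflect_one, pow_one, szegoStar, mul_assoc]

theorem eval_szego_succ (z : ℂ) :
    (szego α (k + 1)).eval z = z * (szego α k).eval z - conj (α k) * (szegoStar α k).eval z := by
  simp [szego_succ]

theorem eval_szegoStar_succ (z : ℂ) :
    (szegoStar α (k + 1)).eval z = (szegoStar α k).eval z - α k * z * (szego α k).eval z := by
  simp [szegoStar_succ]

@[simp]
theorem szegoStar_zero : szegoStar α 0 = 1 := by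
  simp [szegoStar, szego]

theorem szego_congr {α' : ℕ → ℂ} (h : ∀ j < k, α j = α' j) : szego α k = szego α' k := by
  induction k with
  | zero => rfl
  | succ k ih =>
    rw [szego, szego, ih fun j hj => h j (by omega), h k k.lt_succ_self]

theorem popuc_eq_szego {γ : ℕ → ℂ} (β : ℂ) (hγ : ∀ j < k, γ j = α j) (hβ : γ k = β) :
    popuc α β k = szego γ (k + 1) := by
  rw [szego, ← hβ, szego_congr γ k hγ]
  rfl

theorem eval_szego_succ_of_norm_eq_one (hk : ‖α k‖ = 1) (z : ℂ) :
    (szego α (k + 1)).eval z = -conj (α k) * (szegoStar α (k + 1)).eval z := by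
  have hunit : conj (α k) * α k = 1 := by
    rw [mul_comm, Complex.mul_conj, Complex.normSq_eq_norm_sq, hk]; simp
  rw [eval_szego_succ, eval_szegoStar_succ]
  linear_combination -z * (szego α k).eval z * hunit

end Szego

section Entries

variable (γ : ℕ → ℂ) (p : ℕ)

@[simp]
theorem conj_tauc (x : ℂ) : conj (tauc x) = tauc x :=
  Complex.conj_ofReal _

theorem conj_mul_self_add_tauc_mul_self {x : ℂ} (hx : ‖x‖ ≤ 1) :
    conj x * x + tauc x * tauc x = 1 := by
  have h0 : 0 ≤ 1 - ‖x‖ ^ 2 := by nlinarith [norm_nonneg x]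
  rw [tauc, ← Complex.ofReal_mul, Real.mul_self_sqrt h0, mul_comm, Complex.mul_conj,
    Complex.normSq_eq_norm_sq]
  push_cast
  ring

theorem tauc_eq_zero_of_norm_eq_one {x : ℂ} (hx : ‖x‖ = 1) : tauc x = 0 := by
  simp [tauc, hx]

theorem Lent_eq_zero {i j : ℕ} (h : i / 2 ≠ j / 2) : Lent γ i j = 0 := by
  unfold Lent
  split_ifs <;> first | rfl | omega

theorem Ment_eq_zero {i j : ℕ} (h : (i + 1) / 2 ≠ (j + 1) / 2) : Ment γ i j = 0 := by
  unfold Ment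
  split_ifs <;> first | rfl | omega

@[simp] theorem Lent_even_even : Lent γ (2 * p) (2 * p) = conj (γ (2 * p)) := by simp [Lent]
@[simp] theorem Lent_even_odd : Lent γ (2 * p) (2 * p + 1) = tauc (γ (2 * p)) := by simp [Lent]
@[simp] theorem Lent_odd_even : Lent γ (2 * p + 1) (2 * p) = tauc (γ (2 * p)) := by simp [Lent]
@[simp] theorem Lent_odd_odd : Lent γ (2 * p + 1) (2 * p + 1) = -γ (2 * p) := by simp [Lent]

@[simp] theorem Ment_zero_zero : Ment γ 0 0 = 1 := by simp [Ment]
@[simp] theorem Ment_odd_odd : Ment γ (2 * p + 1) (2 * p + 1) = conj (γ (2 * p + 1)) := by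
  simp [Ment]
@[simp] theorem Ment_odd_even : Ment γ (2 * p + 1) (2 * (p + 1)) = tauc (γ (2 * p + 1)) := by
  simp [Ment, mul_add_one]
@[simp] theorem Ment_even_odd : Ment γ (2 * (p + 1)) (2 * p + 1) = tauc (γ (2 * p + 1)) := by
  simp [Ment, mul_add_one]
@[simp] theorem Ment_even_even : Ment γ (2 * (p + 1)) (2 * (p + 1)) = -γ (2 * p + 1) := by
  simp [Ment, mul_add_one]

end Entries

section Factorization

variable (γ : ℕ → ℂ) (z : ℂ)

theorem Lent_band (i j : ℕ) (h : j + 2 ≤ i ∨ i + 2 ≤ j) : Lent γ i j = 0 :=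
  Lent_eq_zero γ (by omega)

theorem sum_range_Lent_mul_conj {n : ℕ} (hγ : ∀ j < n, ‖γ j‖ ≤ 1) (hlast : ‖γ (n - 1)‖ = 1)
    {i j : ℕ} (hi : i < n) (hj : j < n) :
    ∑ k ∈ Finset.range n, Lent γ i k * conj (Lent γ j k) = if i = j then 1 else 0 := by
  generalize hp : i / 2 = p
  refine (Finset.sum_eq_add (2 * p) (2 * p + 1) (by omega) ?_ ?_ ?_).trans ?_
  · intro c _ hc
    rw [Lent_eq_zero γ (i := i) (by omega), zero_mul]
  · intro h
    exact absurd (Finset.mem_range.2 (by omega)) h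
  · -- here `i = 2 * p = n - 1`, and the truncated entry `τ(γ (n - 1))` vanishes
    intro h
    obtain rfl : i = 2 * p := by simp at h; omega
    rw [Lent_even_odd, tauc_eq_zero_of_norm_eq_one (by convert hlast using 3; simp at h; omega),
      zero_mul]
  have hτ := conj_mul_self_add_tauc_mul_self (hγ (2 * p) (by omega))
  by_cases hjp : j / 2 = p
  · obtain rfl | rfl : i = 2 * p ∨ i = 2 * p + 1 := by omega
    · obtain rfl | rfl : j = 2 * p ∨ j = 2 * p + 1 := by omega
      · simp only [Lent_even_even, Lent_even_odd, conj_tauc, Complex.conj_conj, if_true]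
        linear_combination hτ
      · simp
        ring
    · obtain rfl | rfl : j = 2 * p ∨ j = 2 * p + 1 := by omega
      · simp
        ring
      · simp only [Lent_odd_even, Lent_odd_odd, conj_tauc, map_neg, if_true]
        linear_combination hτ
  · rw [Lent_eq_zero γ (i := j) (by omega), Lent_eq_zero γ (i := j) (by omega), if_neg (by omega)]
    simp

theorem leadingBlock_Lent_mul_conjTranspose {n : ℕ} (hγ : ∀ j < n, ‖γ j‖ ≤ 1)
    (hlast : ‖γ (n - 1)‖ = 1) : leadingBlock (Lent γ) n * (leadingBlock (Lent γ) n)ᴴ = 1 := by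
  ext i j
  simp only [mul_apply, conjTranspose_apply, leadingBlock, of_apply, RCLike.star_def]
  rw [Fin.sum_univ_eq_sum_range (fun k => Lent γ i k * conj (Lent γ j k)),
    sum_range_Lent_mul_conj γ hγ hlast i.isLt j.isLt]
  simp [one_apply, Fin.val_inj]

theorem det_leadingBlock_Lent (k : ℕ) (hγ : ∀ j < 2 * k, ‖γ j‖ ≤ 1) :
    (leadingBlock (Lent γ) (2 * k)).det = (-1) ^ k ∧
      (leadingBlock (Lent γ) (2 * k + 1)).det = (-1) ^ k * conj (γ (2 * k)) := by
  induction k with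
  | zero => simp [leadingBlock, Lent]
  | succ k ih =>
    obtain ⟨hev, hodd⟩ := ih fun j hj => hγ j (by omega)
    have hτ := conj_mul_self_add_tauc_mul_self (hγ (2 * k) (by omega))
    have hev' : (leadingBlock (Lent γ) (2 * (k + 1))).det = (-1) ^ (k + 1) := by
      rw [show 2 * (k + 1) = 2 * k + 2 by ring, det_leadingBlock_add_two (Lent_band γ), hev, hodd]
      simp only [Lent_odd_odd, Lent_odd_even, Lent_even_odd]
      linear_combination (-1) ^ (k + 1) * hτ
    refine ⟨hev', ?_⟩
    rw [show 2 * (k + 1) + 1 = 2 * k + 1 + 2 by ring, det_leadingBlock_add_two (Lent_band γ),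
      show 2 * k + 1 + 1 = 2 * (k + 1) by ring, hev', Lent_even_even,
      Lent_eq_zero γ (i := 2 * (k + 1)) (j := 2 * k + 1) (by omega)]
    ring

noncomputable def Nent (i j : ℕ) : ℂ :=
  z * conj (Lent γ j i) - Ment γ i j

theorem Nent_band (i j : ℕ) (h : j + 2 ≤ i ∨ i + 2 ≤ j) : Nent γ z i j = 0 := by
  rw [Nent, Lent_eq_zero γ (by omega), Ment_eq_zero γ (by omega)]
  simp

theorem det_leadingBlock_Nent (k : ℕ) (hγ : ∀ j < 2 * k, ‖γ j‖ ≤ 1) :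
    (leadingBlock (Nent γ z) (2 * k)).det = (-1) ^ k * (szego γ (2 * k)).eval z ∧
      (leadingBlock (Nent γ z) (2 * k + 1)).det =
        (-1) ^ (k + 1) * (szegoStar γ (2 * k + 1)).eval z := by
  induction k with
  | zero =>
    simp [leadingBlock, Nent, Lent, eval_szegoStar_succ, szego]
    ring
  | succ k ih =>
    obtain ⟨hev, hodd⟩ := ih fun j hj => hγ j (by omega)
    have hτ := conj_mul_self_add_tauc_mul_self (hγ (2 * k) (by omega))
    have hτ' := conj_mul_self_add_tauc_mul_self (hγ (2 * k + 1) (by omega))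
    have f1 : (szego γ (2 * (k + 1))).eval z = _ := eval_szego_succ γ (2 * k + 1) z
    have f2 := eval_szego_succ γ (2 * k) z
    have f3 := eval_szegoStar_succ γ (2 * k) z
    have hev' : (leadingBlock (Nent γ z) (2 * (k + 1))).det =
        (-1) ^ (k + 1) * (szego γ (2 * (k + 1))).eval z := by
      rw [mul_add_one, det_leadingBlock_add_two (Nent_band γ z), hev, hodd]
      simp only [Nent, Lent_odd_odd, Lent_odd_even, Lent_even_odd, Ment_odd_odd,
        Ment_eq_zero γ (i := 2 * k + 1) (j := 2 * k) (by omega),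
        Ment_eq_zero γ (i := 2 * k) (j := 2 * k + 1) (by omega), conj_tauc, map_neg]
      linear_combination (-1) ^ k * (f1 + z * f2 + z * conj (γ (2 * k)) * f3 -
        z ^ 2 * (szego γ (2 * k)).eval z * hτ)
    refine ⟨hev', ?_⟩
    have e1 := eval_szegoStar_succ γ (2 * (k + 1)) z
    have e2 : (szegoStar γ (2 * (k + 1))).eval z = _ := eval_szegoStar_succ γ (2 * k + 1) z
    rw [show 2 * (k + 1) + 1 = 2 * k + 1 + 2 by ring, det_leadingBlock_add_two (Nent_band γ z),
      show 2 * k + 1 + 1 = 2 * (k + 1) by ring, hev', hodd]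
    simp only [Nent, Lent_even_even, Ment_even_even, Ment_even_odd, Ment_odd_even,
      Complex.conj_conj, Lent_eq_zero γ (i := 2 * (k + 1)) (j := 2 * k + 1) (by omega),
      Lent_eq_zero γ (i := 2 * k + 1) (j := 2 * (k + 1)) (by omega), map_zero]
    linear_combination (-1) ^ (k + 1) * (e1 + e2 + γ (2 * k + 1) * f1 -
      (szegoStar γ (2 * k + 1)).eval z * hτ')

end Factorization

theorem scalar_sub_CMVfin {γ : ℕ → ℂ} {n : ℕ} (hγ : ∀ j < n, ‖γ j‖ ≤ 1)
    (hlast : ‖γ (n - 1)‖ = 1) (z : ℂ) :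
    scalar (Fin n) z - CMVfin γ n = leadingBlock (Lent γ) n * leadingBlock (Nent γ z) n := by
  have hN : leadingBlock (Nent γ z) n =
      z • (leadingBlock (Lent γ) n)ᴴ - leadingBlock (Ment γ) n := by
    ext i j
    simp [leadingBlock, Nent]
  rw [hN, Matrix.mul_sub, mul_smul_comm, leadingBlock_Lent_mul_conjTranspose γ hγ hlast,
    smul_one_eq_diagonal]
  rfl

theorem charpoly_CMVfin {γ : ℕ → ℂ} {n : ℕ} (hγ : ∀ j < n, ‖γ j‖ ≤ 1)
    (hlast : ‖γ (n - 1)‖ = 1) : (CMVfin γ n).charpoly = szego γ n := by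
  refine Polynomial.funext fun z => ?_
  rw [eval_charpoly, scalar_sub_CMVfin hγ hlast, det_mul]
  have hsq : ∀ k : ℕ, ((-1 : ℂ) ^ k) ^ 2 = 1 := fun k => by rw [← pow_mul, pow_mul']; simp
  obtain ⟨k, rfl | rfl⟩ := Nat.even_or_odd' n
  · rw [(det_leadingBlock_Lent γ k hγ).1, (det_leadingBlock_Nent γ z k hγ).1]
    linear_combination (szego γ (2 * k)).eval z * hsq k
  · have hγ' : ∀ j < 2 * k, ‖γ j‖ ≤ 1 := fun j hj => hγ j (by omega)
    rw [(det_leadingBlock_Lent γ k hγ').2, (det_leadingBlock_Nent γ z k hγ').2,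
      eval_szego_succ_of_norm_eq_one γ (2 * k) hlast]
    linear_combination -conj (γ (2 * k)) * (szegoStar γ (2 * k + 1)).eval z * hsq k

/-- **Proposition 3.2**. With `α_0, …, α_{n-2} ∈ 𝔻` and `β ∈ ∂𝔻`, the paraorthogonal
polynomial `Φ_n(z;β)` equals the characteristic polynomial of the finite CMV matrix
`C_n(α_0, …, α_{n-2}, β)`; in particular, its zeros are exactly the eigenvalues. -/
theorem popuc_eq_charpoly_cmvFin
    (n : ℕ) (hn : 1 ≤ n) (α : ℕ → ℂ)
    (hα : ∀ k < n - 1, ‖α k‖ < 1)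
    (β : ℂ) (hβ : ‖β‖ = 1) :
    popuc α β (n - 1) =
        (CMVfin (fun k => if k = n - 1 then β else α k) n).charpoly ∧
      ∀ z : ℂ, (popuc α β (n - 1)).IsRoot z ↔
        z ∈ spectrum ℂ (CMVfin (fun k => if k = n - 1 then β else α k) n) := by
  set γ : ℕ → ℂ := fun k => if k = n - 1 then β else α k
  have hγβ : γ (n - 1) = β := if_pos rfl
  have hγα : ∀ j < n - 1, γ j = α j := fun j hj => if_neg hj.ne
  have hγ : ∀ j < n, ‖γ j‖ ≤ 1 := fun j hj => by
    rcases (Nat.le_sub_one_of_lt hj).lt_or_eq with hj' | rfl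
    · rw [hγα j hj']; exact (hα j hj').le
    · rw [hγβ, hβ]
  have hpoly : popuc α β (n - 1) = (CMVfin γ n).charpoly := by
    rw [popuc_eq_szego α (n - 1) β hγα hγβ, Nat.sub_add_cancel hn,
      charpoly_CMVfin hγ (by rw [hγβ, hβ])]
  exact ⟨hpoly, fun z => by rw [hpoly, mem_spectrum_iff_isRoot_charpoly]⟩
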